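/- Let (V, ω) be a complex symplectic vector space of dimension 2n and let α, β, γ be Lagrangian subspaces. Let δ and δ′ be Lagrangian subspaces with δ ∩ α = δ ∩ β = δ ∩ γ = {0} and δ′ ∩ α = δ′ ∩ β = δ′ ∩ γ = {0}. Then m⁻(Q(α,δ;β)) + m⁻(Q(β,δ;γ)) + m⁻(Q(α,δ′;γ)) = m⁻(Q(α,δ′;β)) + m⁻(Q(β,δ′;γ)) + m⁻(Q(α,δ;γ)); that is, the triple index i(α,β,γ) := m⁻(Q(α,δ;β)) + m⁻(Q(β,δ;γ)) − m⁻(Q(α,δ;γ)) is independent of the choice of δ. -/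

import Mathlib

open Module Submodule

/-- The annihilator of a subspace `lam` with respect to a sesquilinear form `ω`
(linear in the first variable, conjugate-linear in the second). -/
def symplAnn {V : Type*} [AddCommGroup V] [Module ℂ V]
    (ω : V →ₗ[ℂ] V →ₗ⋆[ℂ] ℂ) (lam : Submodule ℂ V) : Submodule ℂ V where
  carrier := {x | ∀ y ∈ lam, ω x y = 0}
  add_mem' := by
    intro a b ha hb y hy
    simp [ha y hy, hb y hy]
  zero_mem' := by
    intro y hy
    simp
  smul_mem' := by
    intro c x hx y hy
    simp [hx y hy]

/-- The negative Morse index `m⁻(Q(α,β;γ))` of the Hermitian form `Q(α,β;γ)` on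
`α ∩ (β + γ)` given by `Q(x₁,x₂) = ω x₁ z₂` whenever `x₂ = -y₂ + z₂` with
`y₂ ∈ β`, `z₂ ∈ γ`: the maximal dimension of a subspace on which `Q` is
negative definite. -/
noncomputable def negIndexQ {V : Type*} [AddCommGroup V] [Module ℂ V]
    (ω : V →ₗ[ℂ] V →ₗ⋆[ℂ] ℂ) (α β γ : Submodule ℂ V) : ℕ :=
  sSup {n : ℕ | ∃ W : Submodule ℂ V, W ≤ α ⊓ (β ⊔ γ) ∧ Module.finrank ℂ W = n ∧
    ∀ x ∈ W, x ≠ 0 → ∀ y ∈ β, ∀ z ∈ γ, x = -y + z → (ω x z).re < 0}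

/-- The positive Morse index `m⁺(Q(α,β;γ))` of the Hermitian form `Q(α,β;γ)` on
`α ∩ (β + γ)`: the maximal dimension of a subspace on which `Q` is positive
definite. -/
noncomputable def posIndexQ {V : Type*} [AddCommGroup V] [Module ℂ V]
    (ω : V →ₗ[ℂ] V →ₗ⋆[ℂ] ℂ) (α β γ : Submodule ℂ V) : ℕ :=
  sSup {n : ℕ | ∃ W : Submodule ℂ V, W ≤ α ⊓ (β ⊔ γ) ∧ Module.finrank ℂ W = n ∧
    ∀ x ∈ W, x ≠ 0 → ∀ y ∈ β, ∀ z ∈ γ, x = -y + z → 0 < (ω x z).re}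

/-!
Fix a Lagrangian `ε` transverse to `α, β, γ, δ, δ'`; it then suffices to show that the triple
index computed with `δ` agrees with the one computed with `ε` (and likewise for `δ'`).
Such an `ε` exists: for a linear `J : β → δ` with `ω b (J v)` positive definite, the graphs
`{b + t J b}`, `t ∈ ℝ`, are Lagrangian, and a given isotropic subspace meets only finitely
many of them.

For Lagrangians `λ, μ` and `π` the projection onto `ε` along `δ`, the Hermitian form
`Φ(a, b) = ω(a₁ + a₂, π(b₁ + b₂)) - ω(a₁, b₂)` on `λ × μ` splits `Φ`-orthogonally both as
`μ ⊕ graph(-p)` and as `λ ⊕ graph(-q)`, where `p`, `q` project onto `μ` along `δ`, `ε`.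
Additivity and congruence invariance of the negative index turn this into
`m⁻Q(μ,δ;ε) + m⁻Q(λ,δ;μ) = m⁻Q(λ,δ;ε) + m⁻Q(λ,ε;μ)`, and three instances of this identity
compare the two triple indices.
-/

section ConjDual

variable {W : Type*} [AddCommGroup W] [Module ℂ W]

noncomputable def conjDualAddEquivDual : (W →ₗ⋆[ℂ] ℂ) ≃+ Module.Dual ℂ W where
  toFun f := (starLinearEquiv ℂ (A := ℂ)).toLinearMap.comp f
  invFun g := (starLinearEquiv ℂ (A := ℂ)).toLinearMap.comp g
  left_inv f := by ext; simp
  right_inv g := by ext; simp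
  map_add' f g := by ext; simp

theorem rank_conjDual : Module.rank ℂ (W →ₗ⋆[ℂ] ℂ) = Module.rank ℂ (Module.Dual ℂ W) :=
  rank_eq_of_equiv_equiv (starRingEnd ℂ) conjDualAddEquivDual
    (Function.Involutive.bijective Complex.conj_conj)
    fun c f => by ext; simp [conjDualAddEquivDual]

theorem finrank_conjDual : finrank ℂ (W →ₗ⋆[ℂ] ℂ) = finrank ℂ W := by
  rw [finrank, rank_conjDual, ← finrank, Subspace.dual_finrank_eq]

instance [FiniteDimensional ℂ W] : FiniteDimensional ℂ (W →ₗ⋆[ℂ] ℂ) :=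
  Module.rank_lt_aleph0_iff.mp
    (rank_conjDual (W := W) ▸ Module.rank_lt_aleph0_iff.mpr inferInstance)

end ConjDual

theorem Submodule.finrank_sup_of_disjoint {K V : Type*} [DivisionRing K] [AddCommGroup V]
    [Module K V] {s t : Submodule K V} [FiniteDimensional K s] [FiniteDimensional K t]
    (h : Disjoint s t) : finrank K ↥(s ⊔ t) = finrank K s + finrank K t := by
  have := finrank_sup_add_finrank_inf_eq s t
  rwa [h.eq_bot, finrank_bot, add_zero] at this

section Inertia

variable {M : Type*} [AddCommGroup M] [Module ℂ M] (Φ : M →ₗ[ℂ] M →ₗ⋆[ℂ] ℂ)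

def IsNegDefOn (W : Submodule ℂ M) : Prop := ∀ x ∈ W, x ≠ 0 → (Φ x x).re < 0

def IsPosSemidefOn (W : Submodule ℂ M) : Prop := ∀ x ∈ W, 0 ≤ (Φ x x).re

def IsHermitianOn (U : Submodule ℂ M) : Prop :=
  ∀ x ∈ U, ∀ y ∈ U, Φ y x = starRingEnd ℂ (Φ x y)

noncomputable def negIndex (U : Submodule ℂ M) : ℕ :=
  sSup {k | ∃ W ≤ U, IsNegDefOn Φ W ∧ finrank ℂ W = k}

variable {Φ}

theorem re_apply_add_self_of_orthogonal {a b : M} (hab : Φ a b = 0) (hba : Φ b a = 0) :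
    (Φ (a + b) (a + b)).re = (Φ a a).re + (Φ b b).re := by
  simp [hab, hba]

theorem IsNegDefOn.re_apply_self_nonpos {W : Submodule ℂ M} (hW : IsNegDefOn Φ W) {x : M}
    (hx : x ∈ W) : (Φ x x).re ≤ 0 := by
  rcases eq_or_ne x 0 with rfl | hx0
  · simp
  · exact (hW x hx hx0).le

theorem IsNegDefOn.sup {A B : Submodule ℂ M} (hA : IsNegDefOn Φ A) (hB : IsNegDefOn Φ B)
    (hAB : ∀ a ∈ A, ∀ b ∈ B, Φ a b = 0 ∧ Φ b a = 0) : IsNegDefOn Φ (A ⊔ B) := by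
  intro x hx hx0
  obtain ⟨a, ha, b, hb, rfl⟩ := mem_sup.mp hx
  rw [re_apply_add_self_of_orthogonal (hAB a ha b hb).1 (hAB a ha b hb).2]
  rcases eq_or_ne a 0 with rfl | ha0
  · linarith [hA.re_apply_self_nonpos A.zero_mem, hB b hb (by simpa using hx0)]
  · linarith [hA a ha ha0, hB.re_apply_self_nonpos hb]

theorem IsPosSemidefOn.sup {A B : Submodule ℂ M} (hA : IsPosSemidefOn Φ A)
    (hB : IsPosSemidefOn Φ B) (hAB : ∀ a ∈ A, ∀ b ∈ B, Φ a b = 0 ∧ Φ b a = 0) :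
    IsPosSemidefOn Φ (A ⊔ B) := by
  intro x hx
  obtain ⟨a, ha, b, hb, rfl⟩ := mem_sup.mp hx
  rw [re_apply_add_self_of_orthogonal (hAB a ha b hb).1 (hAB a ha b hb).2]
  linarith [hA a ha, hB b hb]

theorem isNegDefOn_span_singleton {v : M} (hv : (Φ v v).re < 0) : IsNegDefOn Φ (ℂ ∙ v) := by
  intro x hx hx0
  obtain ⟨c, rfl⟩ := mem_span_singleton.mp hx
  have hc : c ≠ 0 := by rintro rfl; simp at hx0
  have hΦ : Φ (c • v) (c • v) = (Complex.normSq c : ℂ) * Φ v v := by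
    simp [← Complex.mul_conj]
    ring
  rw [hΦ, Complex.re_ofReal_mul]
  exact mul_neg_of_pos_of_neg (Complex.normSq_pos.mpr hc) hv

theorem IsNegDefOn.eq_zero_of_apply_self_eq_zero {W : Submodule ℂ M} (hW : IsNegDefOn Φ W)
    {x : M} (hx : x ∈ W) (h : Φ x x = 0) : x = 0 :=
  by_contra fun hx0 => by simpa [h] using hW x hx hx0

theorem IsNegDefOn.disjoint {N P : Submodule ℂ M} (hN : IsNegDefOn Φ N)
    (hP : IsPosSemidefOn Φ P) : Disjoint N P :=
  disjoint_def.mpr fun x hxN hxP => by_contra fun hx0 => (hP x hxP).not_gt (hN x hxN hx0)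

theorem IsHermitianOn.mono {U U' : Submodule ℂ M} (hH : IsHermitianOn Φ U) (h : U' ≤ U) :
    IsHermitianOn Φ U' :=
  fun x hx y hy => hH x (h hx) y (h hy)

variable [FiniteDimensional ℂ M]

theorem negIndex_bddAbove (U : Submodule ℂ M) :
    BddAbove {k | ∃ W ≤ U, IsNegDefOn Φ W ∧ finrank ℂ W = k} :=
  ⟨finrank ℂ U, by rintro _ ⟨W, hWU, -, rfl⟩; exact finrank_mono hWU⟩

theorem finrank_le_negIndex {U W : Submodule ℂ M} (hWU : W ≤ U) (hW : IsNegDefOn Φ W) :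
    finrank ℂ W ≤ negIndex Φ U :=
  le_csSup (negIndex_bddAbove U) ⟨W, hWU, hW, rfl⟩

theorem exists_isNegDefOn_finrank_eq_negIndex (U : Submodule ℂ M) :
    ∃ W ≤ U, IsNegDefOn Φ W ∧ finrank ℂ W = negIndex Φ U := by
  refine Nat.sSup_mem ?_ (negIndex_bddAbove U)
  exact ⟨0, ⊥, bot_le, fun x hx hx0 => absurd ((mem_bot ℂ).mp hx) hx0, finrank_bot ℂ M⟩

theorem negIndex_add_finrank_le {U P : Submodule ℂ M} (hPU : P ≤ U) (hP : IsPosSemidefOn Φ P) :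
    negIndex Φ U + finrank ℂ P ≤ finrank ℂ U := by
  obtain ⟨N, hNU, hN, hNk⟩ := exists_isNegDefOn_finrank_eq_negIndex (Φ := Φ) U
  rw [← hNk, ← finrank_sup_of_disjoint (hN.disjoint hP)]
  exact finrank_mono (sup_le hNU hPU)

theorem negIndex_eq_finrank {U N P : Submodule ℂ M} (hNU : N ≤ U) (hPU : P ≤ U)
    (hN : IsNegDefOn Φ N) (hP : IsPosSemidefOn Φ P) (hNP : N ⊔ P = U) :
    negIndex Φ U = finrank ℂ N := by
  have := negIndex_add_finrank_le hPU hP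
  have := finrank_add_le_finrank_add_finrank N P
  rw [hNP] at this
  linarith [finrank_le_negIndex hNU hN]

variable (Φ) in
theorem finrank_le_finrank_ker_compl₂_add (N : Submodule ℂ M) :
    finrank ℂ M ≤ finrank ℂ (LinearMap.ker (Φ.compl₂ N.subtype)) + finrank ℂ N := by
  have := (Φ.compl₂ N.subtype).finrank_range_add_finrank_ker
  have := (LinearMap.range (Φ.compl₂ N.subtype)).finrank_le
  rw [finrank_conjDual] at this
  omega

/-- The complement is the `Φ`-orthogonal of `N` in `U`, positive semidefinite by maximality
of `N`. -/
theorem IsHermitianOn.exists_isPosSemidefOn_sup_eq {U N : Submodule ℂ M}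
    (hH : IsHermitianOn Φ U) (hNU : N ≤ U) (hN : IsNegDefOn Φ N)
    (hNmax : finrank ℂ N = negIndex Φ U) :
    ∃ P ≤ U, IsPosSemidefOn Φ P ∧ N ⊔ P = U := by
  set K := LinearMap.ker (Φ.compl₂ N.subtype)
  have hPU : U ⊓ K ≤ U := inf_le_left
  have horth : ∀ p ∈ U ⊓ K, ∀ n ∈ N, Φ p n = 0 ∧ Φ n p = 0 := by
    intro p hp n hn
    have hpn : Φ p n = 0 := LinearMap.congr_fun (LinearMap.mem_ker.mp hp.2) ⟨n, hn⟩
    exact ⟨hpn, by rw [hH p hp.1 n (hNU hn), hpn, map_zero]⟩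
  have hdisj : Disjoint N (U ⊓ K) := disjoint_def.mpr fun x hxN hxP =>
    hN.eq_zero_of_apply_self_eq_zero hxN (horth x hxP x hxN).1
  have hsup : N ⊔ (U ⊓ K) = U := by
    refine eq_of_le_of_finrank_le (sup_le hNU hPU) ?_
    have h₁ : finrank ℂ M ≤ finrank ℂ K + finrank ℂ N := finrank_le_finrank_ker_compl₂_add Φ N
    have h₂ := finrank_sup_add_finrank_inf_eq U K
    have h₃ := (U ⊔ K).finrank_le
    rw [finrank_sup_of_disjoint hdisj]
    omega
  refine ⟨U ⊓ K, hPU, fun p hp => not_lt.mp fun hneg => ?_, hsup⟩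
  have hspan : (ℂ ∙ p) ≤ U ⊓ K := (span_singleton_le_iff_mem p _).mpr hp
  have hp0 : p ≠ 0 := by rintro rfl; simp at hneg
  have hbig : IsNegDefOn Φ (N ⊔ ℂ ∙ p) :=
    hN.sup (isNegDefOn_span_singleton hneg) fun n hn q hq =>
      (horth q (hspan hq) n hn).symm
  have := finrank_le_negIndex (sup_le hNU (hspan.trans hPU)) hbig
  rw [finrank_sup_of_disjoint (hdisj.mono_right hspan), finrank_span_singleton hp0] at this
  omega

theorem negIndex_sup_of_orthogonal {W₁ W₂ : Submodule ℂ M} (hH : IsHermitianOn Φ (W₁ ⊔ W₂))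
    (horth : ∀ x ∈ W₁, ∀ y ∈ W₂, Φ x y = 0) :
    negIndex Φ (W₁ ⊔ W₂) = negIndex Φ W₁ + negIndex Φ W₂ := by
  have horth' : ∀ a ∈ W₁, ∀ b ∈ W₂, Φ a b = 0 ∧ Φ b a = 0 := fun a ha b hb =>
    ⟨horth a ha b hb, by
      rw [hH a (mem_sup_left ha) b (mem_sup_right hb), horth a ha b hb, map_zero]⟩
  obtain ⟨N₁, hN₁U, hN₁, hN₁k⟩ := exists_isNegDefOn_finrank_eq_negIndex (Φ := Φ) W₁
  obtain ⟨N₂, hN₂U, hN₂, hN₂k⟩ := exists_isNegDefOn_finrank_eq_negIndex (Φ := Φ) W₂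
  obtain ⟨P₁, hP₁U, hP₁, hNP₁⟩ :=
    (hH.mono le_sup_left).exists_isPosSemidefOn_sup_eq hN₁U hN₁ hN₁k
  obtain ⟨P₂, hP₂U, hP₂, hNP₂⟩ :=
    (hH.mono le_sup_right).exists_isPosSemidefOn_sup_eq hN₂U hN₂ hN₂k
  have hN : IsNegDefOn Φ (N₁ ⊔ N₂) :=
    hN₁.sup hN₂ fun a ha b hb => horth' a (hN₁U ha) b (hN₂U hb)
  have hP : IsPosSemidefOn Φ (P₁ ⊔ P₂) :=
    hP₁.sup hP₂ fun a ha b hb => horth' a (hP₁U ha) b (hP₂U hb)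
  have hdisj : Disjoint N₁ N₂ := disjoint_def.mpr fun x hx₁ hx₂ =>
    hN₁.eq_zero_of_apply_self_eq_zero hx₁ (horth x (hN₁U hx₁) x (hN₂U hx₂))
  rw [negIndex_eq_finrank (sup_le_sup hN₁U hN₂U) (sup_le_sup hP₁U hP₂U) hN hP
    (by rw [sup_sup_sup_comm, hNP₁, hNP₂]), finrank_sup_of_disjoint hdisj, hN₁k, hN₂k]

theorem negIndex_map {M₂ : Type*} [AddCommGroup M₂] [Module ℂ M₂] [FiniteDimensional ℂ M₂]
    {Ψ : M₂ →ₗ[ℂ] M₂ →ₗ⋆[ℂ] ℂ} {f : M →ₗ[ℂ] M₂} (hf : Function.Injective f)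
    {U : Submodule ℂ M} (hdiag : ∀ x ∈ U, (Ψ (f x) (f x)).re = (Φ x x).re) :
    negIndex Ψ (U.map f) = negIndex Φ U := by
  have hfinrank : ∀ W : Submodule ℂ M, finrank ℂ (W.map f) = finrank ℂ W := fun W =>
    (LinearEquiv.finrank_eq (equivMapOfInjective f hf W)).symm
  apply le_antisymm
  · obtain ⟨W, hWU, hW, hWk⟩ := exists_isNegDefOn_finrank_eq_negIndex (Φ := Ψ) (U.map f)
    have hWrange : W ≤ LinearMap.range f := hWU.trans LinearMap.map_le_range
    have hcomapU : W.comap f ≤ U := fun x hx => by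
      obtain ⟨u, hu, hux⟩ := hWU hx
      rwa [← hf hux]
    rw [← hWk, ← map_comap_eq_of_le hWrange, hfinrank]
    refine finrank_le_negIndex hcomapU fun x hx hx0 => ?_
    rw [← hdiag x (hcomapU hx)]
    exact hW (f x) hx ((map_ne_zero_iff f hf).mpr hx0)
  · obtain ⟨W, hWU, hW, hWk⟩ := exists_isNegDefOn_finrank_eq_negIndex (Φ := Φ) U
    rw [← hWk, ← hfinrank]
    refine finrank_le_negIndex (map_mono hWU) ?_
    rintro _ ⟨x, hx, rfl⟩ hx0
    rw [hdiag x (hWU hx)]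
    exact hW x hx fun h => hx0 (by rw [h, map_zero])

end Inertia

section Graph

variable {R M M' : Type*} [Ring R] [AddCommGroup M] [Module R M] [AddCommGroup M'] [Module R M']
  {A : Submodule R M} {B : Submodule R M'} {f : M →ₗ[R] M'}

theorem Submodule.prod_eq_map_inr_sup_map_id_prod (hf : ∀ x ∈ A, f x ∈ B) :
    A.prod B = B.map (LinearMap.inr R M M') ⊔ A.map (LinearMap.id.prod f) := by
  refine le_antisymm ?_ (sup_le ?_ ?_)
  · rintro ⟨x, z⟩ ⟨hx, hz⟩
    refine mem_sup.mpr ⟨(0, z - f x), ⟨z - f x, B.sub_mem hz (hf x hx), rfl⟩, (x, f x),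
      ⟨x, hx, rfl⟩, by simp⟩
  · rintro _ ⟨z, hz, rfl⟩
    exact ⟨A.zero_mem, hz⟩
  · rintro _ ⟨x, hx, rfl⟩
    exact ⟨hx, hf x hx⟩

theorem Submodule.prod_eq_map_inl_sup_map_id_prod (hf : ∀ x ∈ A, f x ∈ B)
    (hB : B ≤ A.map f) :
    A.prod B = A.map (LinearMap.inl R M M') ⊔ A.map (LinearMap.id.prod f) := by
  refine le_antisymm ?_ (sup_le ?_ ?_)
  · rintro ⟨x, z⟩ ⟨hx, hz⟩
    obtain ⟨x₁, hx₁, rfl⟩ := hB hz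
    refine mem_sup.mpr ⟨(x - x₁, 0), ⟨x - x₁, A.sub_mem hx hx₁, rfl⟩, (x₁, f x₁),
      ⟨x₁, hx₁, rfl⟩, by simp⟩
  · rintro _ ⟨x, hx, rfl⟩
    exact ⟨hx, B.zero_mem⟩
  · rintro _ ⟨x, hx, rfl⟩
    exact ⟨hx, hf x hx⟩

theorem LinearMap.id_prod_injective (f : M →ₗ[R] M') :
    Function.Injective (LinearMap.id.prod f) :=
  fun _ _ h => congrArg Prod.fst h

end Graph

section Symplectic

variable {V : Type*} [AddCommGroup V] [Module ℂ V] (ω : V →ₗ[ℂ] V →ₗ⋆[ℂ] ℂ)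

def IsLagrangian (L : Submodule ℂ V) : Prop := L = symplAnn ω L

variable {ω}

theorem mem_symplAnn {U : Submodule ℂ V} {x : V} : x ∈ symplAnn ω U ↔ ∀ y ∈ U, ω x y = 0 :=
  Iff.rfl

theorem symplAnn_eq_ker (U : Submodule ℂ V) :
    symplAnn ω U = LinearMap.ker (ω.compl₂ U.subtype) := by
  ext x
  simp [mem_symplAnn, LinearMap.ext_iff]

theorem IsLagrangian.isotropic {L : Submodule ℂ V} (hL : IsLagrangian ω L) : L ≤ symplAnn ω L :=
  hL.le

variable [FiniteDimensional ℂ V]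

theorem surjective_compl₂_subtype (hNd : ∀ x : V, (∀ y : V, ω x y = 0) → x = 0)
    (U : Submodule ℂ V) : Function.Surjective (ω.compl₂ U.subtype) := by
  have hω : Function.Surjective ω := by
    refine (LinearMap.injective_iff_surjective_of_finrank_eq_finrank
      finrank_conjDual.symm).mp fun x y hxy => ?_
    rw [← sub_eq_zero]
    exact hNd _ fun z => by simp [hxy]
  intro g
  obtain ⟨U', hU'⟩ := U.exists_isCompl
  obtain ⟨x, hx⟩ := hω (g.comp (U.projectionOnto U' hU'))
  exact ⟨x, by ext u; simp [hx]⟩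

theorem finrank_symplAnn_add_finrank (hNd : ∀ x : V, (∀ y : V, ω x y = 0) → x = 0)
    (U : Submodule ℂ V) : finrank ℂ (symplAnn ω U) + finrank ℂ U = finrank ℂ V := by
  have := (ω.compl₂ U.subtype).finrank_range_add_finrank_ker
  rw [LinearMap.range_eq_top.mpr (surjective_compl₂_subtype hNd U), finrank_top,
    finrank_conjDual, ← symplAnn_eq_ker] at this
  omega

theorem IsLagrangian.two_mul_finrank (hNd : ∀ x : V, (∀ y : V, ω x y = 0) → x = 0)
    {L : Submodule ℂ V} (hL : IsLagrangian ω L) : 2 * finrank ℂ L = finrank ℂ V := by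
  have := finrank_symplAnn_add_finrank hNd L
  rw [← hL] at this
  omega

theorem isLagrangian_of_two_mul_finrank (hNd : ∀ x : V, (∀ y : V, ω x y = 0) → x = 0)
    {L : Submodule ℂ V} (hiso : L ≤ symplAnn ω L) (hdim : 2 * finrank ℂ L = finrank ℂ V) :
    IsLagrangian ω L :=
  eq_of_le_of_finrank_le hiso (by have := finrank_symplAnn_add_finrank hNd L; omega)

theorem IsLagrangian.isCompl (hNd : ∀ x : V, (∀ y : V, ω x y = 0) → x = 0)
    {L₁ L₂ : Submodule ℂ V} (h₁ : IsLagrangian ω L₁) (h₂ : IsLagrangian ω L₂)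
    (h : L₁ ⊓ L₂ = ⊥) : IsCompl L₁ L₂ := by
  have hdisj : Disjoint L₁ L₂ := disjoint_iff.mpr h
  refine ⟨hdisj, codisjoint_iff.mpr (eq_top_of_disjoint L₁ L₂ ?_ hdisj)⟩
  have := h₁.two_mul_finrank hNd
  have := h₂.two_mul_finrank hNd
  omega

end Symplectic

section ChangeOfReference

variable {V : Type*} [AddCommGroup V] [Module ℂ V] {ω : V →ₗ[ℂ] V →ₗ⋆[ℂ] ℂ}

theorem negIndexQ_eq_negIndex (lam : Submodule ℂ V) {δ μ : Submodule ℂ V} (h : IsCompl μ δ) :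
    negIndexQ ω lam δ μ = negIndex (ω.compl₂ (μ.projection δ h)) lam := by
  have hdecomp : ∀ x y z, y ∈ δ → z ∈ μ → x = -y + z → z = μ.projection δ h x := by
    rintro x y z hy hz rfl
    rw [map_add, map_neg, (projection_apply_eq_zero_iff h).mpr hy,
      projection_apply_of_mem_left h hz, neg_zero, zero_add]
  unfold negIndexQ negIndex
  rw [h.symm.sup_eq_top, inf_top_eq]
  congr 1
  ext k
  constructor
  · rintro ⟨W, hW, rfl, hneg⟩
    refine ⟨W, hW, fun x hx hx0 => hneg x hx hx0 (μ.projection δ h x - x) ?_ _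
      (projection_apply_mem h x) (by abel), rfl⟩
    simpa using δ.neg_mem (sub_projection_mem h x)
  · rintro ⟨W, hW, hneg, rfl⟩
    exact ⟨W, hW, rfl, fun x hx hx0 y hy z hz hxyz => hdecomp x y z hy hz hxyz ▸ hneg x hx hx0⟩

theorem apply_projection_add_apply_projection {δ ε : Submodule ℂ V} (hδ : δ ≤ symplAnn ω δ)
    (hε : ε ≤ symplAnn ω ε) (h : IsCompl ε δ) (v w : V) :
    ω v (ε.projection δ h w) + ω (ε.projection δ h v) w = ω v w := by
  have h₁ := hδ (sub_projection_mem h v) _ (sub_projection_mem h w)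
  have h₂ := hε (projection_apply_mem h v) _ (projection_apply_mem h w)
  simp only [map_sub, LinearMap.sub_apply] at h₁
  linear_combination h₂ - h₁

variable (ω) in
noncomputable def exchangeForm (π : V →ₗ[ℂ] V) : (V × V) →ₗ[ℂ] (V × V) →ₗ⋆[ℂ] ℂ :=
  (ω ∘ₗ (LinearMap.fst ℂ V V + LinearMap.snd ℂ V V)).compl₂
      (π ∘ₗ (LinearMap.fst ℂ V V + LinearMap.snd ℂ V V)) -
    (ω ∘ₗ LinearMap.fst ℂ V V).compl₂ (LinearMap.snd ℂ V V)

@[simp]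
theorem exchangeForm_apply (π : V →ₗ[ℂ] V) (a b : V × V) :
    exchangeForm ω π a b = ω (a.1 + a.2) (π (b.1 + b.2)) - ω a.1 b.2 :=
  rfl

theorem exchangeForm_isHermitianOn (hSkew : ∀ x y : V, ω y x = -(starRingEnd ℂ) (ω x y))
    {δ ε lam μ : Submodule ℂ V} (hδ : δ ≤ symplAnn ω δ) (hε : ε ≤ symplAnn ω ε)
    (hlam : lam ≤ symplAnn ω lam) (hμ : μ ≤ symplAnn ω μ) (h : IsCompl ε δ) :
    IsHermitianOn (exchangeForm ω (ε.projection δ h)) (lam.prod μ) := by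
  rintro ⟨x, z⟩ ⟨hx, hz⟩ ⟨x', z'⟩ ⟨hx', hz'⟩
  have hconj : ∀ a b, starRingEnd ℂ (ω a b) = -ω b a := fun a b => by
    rw [hSkew a b, neg_neg]
  have hsum : ω (x' + z') (x + z) = ω x' z + ω z' x := by
    simp only [map_add, LinearMap.add_apply, hlam hx' x hx, hμ hz' z hz]
    ring
  simp only [exchangeForm_apply, map_sub, hconj]
  linear_combination apply_projection_add_apply_projection hδ hε h (x' + z') (x + z) + hsum

theorem negIndex_exchangeForm_eq_left (hSkew : ∀ x y : V, ω y x = -(starRingEnd ℂ) (ω x y))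
    {δ ε lam μ : Submodule ℂ V} (hδ : δ ≤ symplAnn ω δ) (hε : ε ≤ symplAnn ω ε)
    (hlam : lam ≤ symplAnn ω lam) (hμ : μ ≤ symplAnn ω μ) (hεδ : IsCompl ε δ)
    (hμδ : IsCompl μ δ) [FiniteDimensional ℂ V] :
    negIndex (exchangeForm ω (ε.projection δ hεδ)) (lam.prod μ) =
      negIndexQ ω μ δ ε + negIndexQ ω lam δ μ := by
  have hH := exchangeForm_isHermitianOn hSkew hδ hε hlam hμ hεδ
  have hπ : ∀ x, ε.projection δ hεδ (x + -μ.projection δ hμδ x) = 0 := fun x =>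
    (projection_apply_eq_zero_iff hεδ).mpr
      (by simpa [sub_eq_add_neg] using sub_projection_mem hμδ x)
  rw [prod_eq_map_inr_sup_map_id_prod (f := -μ.projection δ hμδ)
    (fun x _ => μ.neg_mem (projection_apply_mem hμδ x))] at hH ⊢
  rw [negIndex_sup_of_orthogonal hH ?orth, negIndexQ_eq_negIndex μ hεδ,
    negIndexQ_eq_negIndex lam hμδ]
  case orth =>
    rintro _ ⟨z, -, rfl⟩ _ ⟨x, -, rfl⟩
    simp [hπ]
  congr 1
  · exact negIndex_map LinearMap.inr_injective fun z _ => by simp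
  · exact negIndex_map (LinearMap.id_prod_injective _) fun x _ => by simp [hπ]

theorem negIndex_exchangeForm_eq_right (hSkew : ∀ x y : V, ω y x = -(starRingEnd ℂ) (ω x y))
    {δ ε lam μ : Submodule ℂ V} (hδ : δ ≤ symplAnn ω δ) (hε : ε ≤ symplAnn ω ε)
    (hlam : lam ≤ symplAnn ω lam) (hμ : μ ≤ symplAnn ω μ) (hεδ : IsCompl ε δ)
    (hμε : IsCompl μ ε) (hεlam : ε ⊔ lam = ⊤) [FiniteDimensional ℂ V] :
    negIndex (exchangeForm ω (ε.projection δ hεδ)) (lam.prod μ) =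
      negIndexQ ω lam δ ε + negIndexQ ω lam ε μ := by
  have hH := exchangeForm_isHermitianOn hSkew hδ hε hlam hμ hεδ
  have hπ : ∀ x, ε.projection δ hεδ (x + -μ.projection ε hμε x) = x + -μ.projection ε hμε x :=
    fun x => projection_apply_of_mem_left hεδ
      (by simpa [sub_eq_add_neg] using sub_projection_mem hμε x)
  have honto : μ ≤ lam.map (-μ.projection ε hμε) := by
    intro z hz
    obtain ⟨e, he, x, hx, hex⟩ := mem_sup.mp (hεlam ▸ mem_top : -z ∈ ε ⊔ lam)
    refine ⟨x, hx, ?_⟩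
    have := congrArg (μ.projection ε hμε) hex
    rw [map_add, (projection_apply_eq_zero_iff hμε).mpr he, zero_add, map_neg,
      projection_apply_of_mem_left hμε hz] at this
    simp [this]
  rw [prod_eq_map_inl_sup_map_id_prod (fun x _ => μ.neg_mem (projection_apply_mem hμε x))
    honto] at hH ⊢
  rw [negIndex_sup_of_orthogonal hH ?orth, negIndexQ_eq_negIndex lam hεδ,
    negIndexQ_eq_negIndex lam hμε]
  case orth =>
    rintro _ ⟨x', hx', rfl⟩ _ ⟨x, hx, rfl⟩
    simp [hπ, hlam hx' x hx]
  congr 1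
  · exact negIndex_map LinearMap.inl_injective fun x _ => by simp
  · refine negIndex_map (LinearMap.id_prod_injective _) fun x _ => ?_
    have hεx := hε (sub_projection_mem hμε x) _ (sub_projection_mem hμε x)
    simp only [sub_eq_add_neg] at hεx
    change (exchangeForm ω _ (x, -μ.projection ε hμε x) (x, -μ.projection ε hμε x)).re = _
    rw [exchangeForm_apply, hπ, hεx, map_neg, zero_sub, neg_neg]
    rfl

theorem negIndexQ_change_reference (hSkew : ∀ x y : V, ω y x = -(starRingEnd ℂ) (ω x y))
    {δ ε lam μ : Submodule ℂ V} (hδ : δ ≤ symplAnn ω δ) (hε : ε ≤ symplAnn ω ε)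
    (hlam : lam ≤ symplAnn ω lam) (hμ : μ ≤ symplAnn ω μ) (hεδ : IsCompl ε δ)
    (hμδ : IsCompl μ δ) (hμε : IsCompl μ ε) (hεlam : ε ⊔ lam = ⊤) [FiniteDimensional ℂ V] :
    negIndexQ ω μ δ ε + negIndexQ ω lam δ μ = negIndexQ ω lam δ ε + negIndexQ ω lam ε μ := by
  rw [← negIndex_exchangeForm_eq_left hSkew hδ hε hlam hμ hεδ hμδ,
    negIndex_exchangeForm_eq_right hSkew hδ hε hlam hμ hεδ hμε hεlam]

end ChangeOfReference

section Transversal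

open scoped InnerProductSpace

variable {V : Type*} [AddCommGroup V] [Module ℂ V] {ω : V →ₗ[ℂ] V →ₗ⋆[ℂ] ℂ}
  {E : Type*} [NormedAddCommGroup E] [InnerProductSpace ℂ E]

theorem exists_linearMap_apply_eq_inner (hSkew : ∀ x y : V, ω y x = -(starRingEnd ℂ) (ω x y))
    (hNd : ∀ x : V, (∀ y : V, ω x y = 0) → x = 0) {β δ : Submodule ℂ V}
    (hβ : β ≤ symplAnn ω β) (hδβ : δ ⊔ β = ⊤) (e : β ≃ₗ[ℂ] E) [FiniteDimensional ℂ V] :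
    ∃ J : E →ₗ[ℂ] V, (∀ v, J v ∈ δ) ∧ ∀ (b : β) v, ω b (J v) = ⟪v, e b⟫_ℂ := by
  set Θ : δ →ₗ[ℂ] (β →ₗ⋆[ℂ] ℂ) := ω.compl₂ β.subtype ∘ₗ δ.subtype
  have hΘ : Function.Surjective Θ := by
    intro g
    obtain ⟨x, rfl⟩ := surjective_compl₂_subtype hNd β g
    obtain ⟨d, hd, b, hb, rfl⟩ := mem_sup.mp (hδβ ▸ mem_top : x ∈ δ ⊔ β)
    refine ⟨⟨d, hd⟩, LinearMap.ext fun b' => ?_⟩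
    simp [Θ, hβ hb _ b'.2]
  obtain ⟨R, hR⟩ := Θ.exists_rightInverse_of_surjective (LinearMap.range_eq_top.mpr hΘ)
  set F : E →ₗ[ℂ] (β →ₗ⋆[ℂ] ℂ) := -(innerₛₗ ℂ).flip.compl₂ e.toLinearMap
  refine ⟨δ.subtype ∘ₗ R ∘ₗ F, fun v => (R _).2, fun b v => ?_⟩
  have hJ : ω (R (F v)) b = F v b := LinearMap.congr_fun (LinearMap.congr_fun hR (F v)) b
  rw [LinearMap.comp_apply, LinearMap.comp_apply, subtype_apply, hSkew, hJ]
  simp [F]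

variable {ι : ℝ → E →ₗ[ℂ] V}

theorem injective_of_apply_apply_eq_inner
    (hι : ∀ t s u v, ω (ι t u) (ι s v) = ((s : ℂ) - t) * ⟪v, u⟫_ℂ) (t : ℝ) :
    Function.Injective (ι t) := by
  refine (injective_iff_map_eq_zero _).mpr fun u hu => ?_
  have := hι t (t + 1) u u
  rw [hu, map_zero, LinearMap.zero_apply] at this
  simpa using this.symm

theorem isLagrangian_range_of_apply_apply_eq_inner (hNd : ∀ x : V, (∀ y : V, ω x y = 0) → x = 0)
    (hι : ∀ t s u v, ω (ι t u) (ι s v) = ((s : ℂ) - t) * ⟪v, u⟫_ℂ)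
    (hdim : 2 * finrank ℂ E = finrank ℂ V) [FiniteDimensional ℂ V] (t : ℝ) :
    IsLagrangian ω (LinearMap.range (ι t)) := by
  refine isLagrangian_of_two_mul_finrank hNd ?_ ?_
  · rintro _ ⟨u, rfl⟩ _ ⟨v, rfl⟩
    simp [hι]
  · rw [LinearMap.finrank_range_of_inj (injective_of_apply_apply_eq_inner hι t), hdim]

/-- If `ι t u` and `ι s v` with `s ≠ t` both lie in the isotropic `L`, then `u ⊥ v`; so infinitely
many such `t` would give an infinite orthogonal family in `E`. -/
theorem finite_setOf_range_inf_ne_bot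
    (hι : ∀ t s u v, ω (ι t u) (ι s v) = ((s : ℂ) - t) * ⟪v, u⟫_ℂ)
    {L : Submodule ℂ V} (hL : L ≤ symplAnn ω L) [FiniteDimensional ℂ E] :
    {t : ℝ | LinearMap.range (ι t) ⊓ L ≠ ⊥}.Finite := by
  by_contra hinf
  have : Infinite {t : ℝ | LinearMap.range (ι t) ⊓ L ≠ ⊥} := Set.infinite_coe_iff.mpr hinf
  have hwit : ∀ t : {t : ℝ | LinearMap.range (ι t) ⊓ L ≠ ⊥}, ∃ u, u ≠ 0 ∧ ι t u ∈ L := by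
    rintro ⟨t, ht⟩
    obtain ⟨_, ⟨⟨u, rfl⟩, hu⟩, hu0⟩ := exists_mem_ne_zero_of_ne_bot ht
    exact ⟨u, fun h => hu0 (by rw [h, map_zero]), hu⟩
  choose u hu0 huL using hwit
  refine Module.Finite.not_linearIndependent_of_infinite u
    (linearIndependent_of_ne_zero_of_inner_eq_zero (𝕜 := ℂ) hu0 fun s t hst => ?_)
  have := hι t s (u t) (u s)
  rw [hL (huL t) _ (huL s), zero_eq_mul] at this
  exact this.resolve_left (sub_ne_zero.mpr (by exact_mod_cast Subtype.coe_injective.ne hst))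

theorem exists_isLagrangian_inf_eq_bot (hSkew : ∀ x y : V, ω y x = -(starRingEnd ℂ) (ω x y))
    (hNd : ∀ x : V, (∀ y : V, ω x y = 0) → x = 0) {β δ : Submodule ℂ V}
    (hβ : IsLagrangian ω β) (hδ : IsLagrangian ω δ) (hδβ : δ ⊓ β = ⊥)
    (Ls : Finset (Submodule ℂ V)) (hLs : ∀ L ∈ Ls, L ≤ symplAnn ω L) [FiniteDimensional ℂ V] :
    ∃ ε, IsLagrangian ω ε ∧ ∀ L ∈ Ls, ε ⊓ L = ⊥ := by
  let e : β ≃ₗ[ℂ] EuclideanSpace ℂ (Fin (finrank ℂ β)) := LinearEquiv.ofFinrankEq _ _ (by simp)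
  obtain ⟨J, hJδ, hJ⟩ := exists_linearMap_apply_eq_inner hSkew hNd hβ.isotropic
    (hδ.isCompl hNd hβ hδβ).sup_eq_top e
  let ι : ℝ → EuclideanSpace ℂ (Fin (finrank ℂ β)) →ₗ[ℂ] V :=
    fun t => β.subtype ∘ₗ e.symm.toLinearMap + (t : ℂ) • J
  have hι : ∀ t s u v, ω (ι t u) (ι s v) = ((s : ℂ) - t) * ⟪v, u⟫_ℂ := by
    intro t s u v
    have h₁ := hJ (e.symm u) v
    have h₂ : ω (J u) (e.symm v) = -⟪v, u⟫_ℂ := by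
      rw [hSkew, hJ, LinearEquiv.apply_symm_apply, inner_conj_symm]
    rw [LinearEquiv.apply_symm_apply] at h₁
    simp only [ι, LinearMap.add_apply, LinearMap.comp_apply, LinearMap.smul_apply, map_add,
      LinearMap.map_smulₛₗ, LinearEquiv.coe_coe, subtype_apply, h₁, h₂,
      hβ.isotropic (e.symm u).2 _ (e.symm v).2, hδ.isotropic (hJδ u) _ (hJδ v),
      Complex.conj_ofReal, RingHom.id_apply, smul_eq_mul]
    ring
  have hdim : 2 * finrank ℂ (EuclideanSpace ℂ (Fin (finrank ℂ β))) = finrank ℂ V := by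
    simpa using hβ.two_mul_finrank hNd
  have hfin : (⋃ L ∈ Ls, {t : ℝ | LinearMap.range (ι t) ⊓ L ≠ ⊥}).Finite :=
    Ls.finite_toSet.biUnion fun L hL => finite_setOf_range_inf_ne_bot hι (hLs L hL)
  obtain ⟨t, ht⟩ := hfin.infinite_compl.nonempty
  exact ⟨_, isLagrangian_range_of_apply_apply_eq_inner hNd hι hdim t,
    fun L hL => by_contra fun h => ht (Set.mem_biUnion hL h)⟩

end Transversal

section TripleIndex

variable {V : Type*} [AddCommGroup V] [Module ℂ V]

noncomputable def tripleIndex (ω : V →ₗ[ℂ] V →ₗ⋆[ℂ] ℂ) (α β γ δ : Submodule ℂ V) : ℤ :=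
  negIndexQ ω α δ β + negIndexQ ω β δ γ - negIndexQ ω α δ γ

theorem tripleIndex_eq_of_inf_eq_bot {ω : V →ₗ[ℂ] V →ₗ⋆[ℂ] ℂ}
    (hSkew : ∀ x y : V, ω y x = -(starRingEnd ℂ) (ω x y))
    (hNd : ∀ x : V, (∀ y : V, ω x y = 0) → x = 0) {α β γ δ ε : Submodule ℂ V}
    (hα : IsLagrangian ω α) (hβ : IsLagrangian ω β) (hγ : IsLagrangian ω γ)
    (hδ : IsLagrangian ω δ) (hε : IsLagrangian ω ε) (hδε : δ ⊓ ε = ⊥) (hδβ : δ ⊓ β = ⊥)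
    (hδγ : δ ⊓ γ = ⊥) (hεα : ε ⊓ α = ⊥) (hεβ : ε ⊓ β = ⊥) (hεγ : ε ⊓ γ = ⊥)
    [FiniteDimensional ℂ V] :
    tripleIndex ω α β γ δ = tripleIndex ω α β γ ε := by
  have compl : ∀ {L₁ L₂}, IsLagrangian ω L₁ → IsLagrangian ω L₂ → L₂ ⊓ L₁ = ⊥ → IsCompl L₁ L₂ :=
    fun h₁ h₂ h => h₁.isCompl hNd h₂ (by rwa [inf_comm])
  have hεδ := compl hε hδ hδε
  have h₁ := negIndexQ_change_reference hSkew hδ.isotropic hε.isotropic hα.isotropic hβ.isotropic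
    hεδ (compl hβ hδ hδβ) (compl hβ hε hεβ) (hε.isCompl hNd hα hεα).sup_eq_top
  have h₂ := negIndexQ_change_reference hSkew hδ.isotropic hε.isotropic hβ.isotropic hγ.isotropic
    hεδ (compl hγ hδ hδγ) (compl hγ hε hεγ) (hε.isCompl hNd hβ hεβ).sup_eq_top
  have h₃ := negIndexQ_change_reference hSkew hδ.isotropic hε.isotropic hα.isotropic hγ.isotropic
    hεδ (compl hγ hδ hδγ) (compl hγ hε hεγ) (hε.isCompl hNd hα hεα).sup_eq_top
  unfold tripleIndex
  omega

end TripleIndex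

theorem stmt13_general {V : Type*} [AddCommGroup V] [Module ℂ V] [FiniteDimensional ℂ V]
    (ω : V →ₗ[ℂ] V →ₗ⋆[ℂ] ℂ)
    (hSkew : ∀ x y : V, ω y x = -(starRingEnd ℂ) (ω x y))
    (hNd : ∀ x : V, (∀ y : V, ω x y = 0) → x = 0)
    (α β γ δ δ' : Submodule ℂ V)
    (hα : α = symplAnn ω α) (hβ : β = symplAnn ω β) (hγ : γ = symplAnn ω γ)
    (hδ : δ = symplAnn ω δ) (hδ' : δ' = symplAnn ω δ')
    (hδβ : δ ⊓ β = ⊥) (hδγ : δ ⊓ γ = ⊥)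
    (hδ'β : δ' ⊓ β = ⊥) (hδ'γ : δ' ⊓ γ = ⊥) :
    negIndexQ ω α δ β + negIndexQ ω β δ γ + negIndexQ ω α δ' γ =
      negIndexQ ω α δ' β + negIndexQ ω β δ' γ + negIndexQ ω α δ γ := by
  obtain ⟨ε, hε, hεL⟩ := exists_isLagrangian_inf_eq_bot hSkew hNd hβ hδ hδβ {α, β, γ, δ, δ'}
    (by simp only [Finset.mem_insert, Finset.mem_singleton]
        rintro L (rfl | rfl | rfl | rfl | rfl) <;> apply le_of_eq <;> assumption)
  have hδε : δ ⊓ ε = ⊥ := by rw [inf_comm]; exact hεL δ (by simp)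
  have hδ'ε : δ' ⊓ ε = ⊥ := by rw [inf_comm]; exact hεL δ' (by simp)
  have h := tripleIndex_eq_of_inf_eq_bot hSkew hNd hα hβ hγ hδ hε hδε hδβ hδγ
    (hεL α (by simp)) (hεL β (by simp)) (hεL γ (by simp))
  have h' := tripleIndex_eq_of_inf_eq_bot hSkew hNd hα hβ hγ hδ' hε hδ'ε hδ'β hδ'γ
    (hεL α (by simp)) (hεL β (by simp)) (hεL γ (by simp))
  unfold tripleIndex at h h'
  omega

theorem stmt13 {V : Type*} [AddCommGroup V] [Module ℂ V] [FiniteDimensional ℂ V]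
    (n : ℕ) (hdim : Module.finrank ℂ V = 2 * n)
    (ω : V →ₗ[ℂ] V →ₗ⋆[ℂ] ℂ)
    (hSkew : ∀ x y : V, ω y x = -(starRingEnd ℂ) (ω x y))
    (hNd : ∀ x : V, (∀ y : V, ω x y = 0) → x = 0)
    (α β γ δ δ' : Submodule ℂ V)
    (hα : α = symplAnn ω α) (hβ : β = symplAnn ω β) (hγ : γ = symplAnn ω γ)
    (hδ : δ = symplAnn ω δ) (hδ' : δ' = symplAnn ω δ')
    (hδα : δ ⊓ α = ⊥) (hδβ : δ ⊓ β = ⊥) (hδγ : δ ⊓ γ = ⊥)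
    (hδ'α : δ' ⊓ α = ⊥) (hδ'β : δ' ⊓ β = ⊥) (hδ'γ : δ' ⊓ γ = ⊥) :
    negIndexQ ω α δ β + negIndexQ ω β δ γ + negIndexQ ω α δ' γ =
      negIndexQ ω α δ' β + negIndexQ ω β δ' γ + negIndexQ ω α δ γ :=
  stmt13_general ω hSkew hNd α β γ δ δ' hα hβ hγ hδ hδ' hδβ hδγ hδ'β hδ'γ
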